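/- arXiv:2507.02369 — 6 statements merged into one kernel-verified Lean document; each statement's English description precedes it below -/
import Mathlib

section
/- For every N ≥ 1, the integral over the standard simplex { y ∈ ℝ^{N−1} : y_i ≥ 0 for all i, and y_1 + ⋯ + y_{N−1} ≤ 1 } of the squared Vandermonde determinant ∏_{1 ≤ i < j ≤ N} (x_i − x_j)², where x_i = y_i for 1 ≤ i ≤ N−1 and x_N = 1 − (y_1 + ⋯ + y_{N−1}), equals N! · (∏_{k=1}^{N} (k−1)!)² / (N² − 1)!. -/
open MeasureTheory

/-- The `N` values `x_1, …, x_N` determined by `y ∈ ℝ^{N-1}`: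
`x_i = y_i` for `1 ≤ i ≤ N-1` and `x_N = 1 - (y_1 + ⋯ + y_{N-1})`. -/
noncomputable def xOf {N : ℕ} (y : Fin (N - 1) → ℝ) (i : Fin N) : ℝ :=
  if h : (i : ℕ) < N - 1 then y ⟨i, h⟩ else 1 - ∑ j, y j

/-!
Expanding the squared Vandermonde determinant gives
`V(x)² = ∑_{σ,τ} sgn σ sgn τ ∏ᵢ xᵢ ^ (σ i + τ i)`, and each monomial integrates over the simplex
by Dirichlet's formula `∫ ∏ yᵢ ^ aᵢ * (1 - ∑ yᵢ) ^ b = (∏ aᵢ!) b! / (n + ∑ aᵢ + b)!`, which follows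
by slicing off one coordinate and evaluating a Beta integral. All monomials have degree `N(N-1)`,
so the integral is `(N² - 1)!⁻¹ ∑_{σ,τ} sgn σ sgn τ ∏ᵢ (σ i + τ i)! = N! det((i+j)!) / (N² - 1)!`.
Finally the Hankel matrix `((i+j)!)` is `L Lᵀ` for the lower triangular `L i k = i! C(i,k)`
(Vandermonde's identity), so its determinant is `(∏ k!)²`.
-/

open Set Finset Equiv
open scoped Nat

theorem integral_pow_mul_sub_pow_succ (a b : ℕ) (s : ℝ) :
    ∫ x in (0 : ℝ)..s, x ^ a * (s - x) ^ (b + 1)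
      = (b + 1) / (a + 1) * ∫ x in (0 : ℝ)..s, x ^ (a + 1) * (s - x) ^ b := by
  have hu : ∀ x ∈ uIcc 0 s, HasDerivAt (fun x : ℝ => (s - x) ^ (b + 1))
      (-((b + 1) * (s - x) ^ b)) x := fun x _ => by
    simpa using ((hasDerivAt_id x).const_sub s).fun_pow (b + 1)
  have hv : ∀ x ∈ uIcc 0 s, HasDerivAt (fun x : ℝ => x ^ (a + 1) / (a + 1)) (x ^ a) x :=
    fun x _ => ((hasDerivAt_pow (a + 1) x).div_const ((a : ℝ) + 1)).congr_deriv (by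
      push_cast
      field_simp)
  have hparts := intervalIntegral.integral_mul_deriv_eq_deriv_mul hu hv
    (by apply Continuous.intervalIntegrable; fun_prop)
    (by apply Continuous.intervalIntegrable; fun_prop)
  simp only [sub_self, sub_zero, ne_eq, Nat.add_eq_zero_iff, one_ne_zero, and_false,
    not_false_eq_true, zero_pow, zero_div, mul_zero, zero_mul] at hparts
  rw [← intervalIntegral.integral_const_mul]
  calc _ = ∫ x in (0 : ℝ)..s, (s - x) ^ (b + 1) * x ^ a := by simp only [mul_comm]
    _ = _ := by
      rw [hparts, zero_sub, ← intervalIntegral.integral_neg]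
      congr 1
      ext x
      ring

theorem integral_pow_mul_sub_pow (a b : ℕ) (s : ℝ) :
    ∫ x in (0 : ℝ)..s, x ^ a * (s - x) ^ b
      = s ^ (a + b + 1) * (a ! * b ! : ℝ) / (a + b + 1)! := by
  induction b generalizing a with
  | zero =>
    simp only [pow_zero, mul_one, integral_pow, Nat.factorial_succ, Nat.add_zero]
    push_cast
    field_simp
    ring
  | succ b ih =>
    rw [integral_pow_mul_sub_pow_succ, ih, Nat.factorial_succ a, Nat.factorial_succ b,
      show a + 1 + b + 1 = a + (b + 1) + 1 by ring]
    push_cast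
    field_simp

theorem integral_fin_cons {α E : Type*} [MeasureSpace α] [SigmaFinite (volume : Measure α)]
    [NormedAddCommGroup E] [NormedSpace ℝ E] {n : ℕ} {f : (Fin (n + 1) → α) → E}
    (hf : Integrable f) :
    ∫ y, f y = ∫ t, ∫ z, f (Fin.cons t z) := by
  have he := (volume_preserving_piFinSuccAbove (fun _ : Fin (n + 1) => α) 0).symm
  have hcons : ∀ p : α × (Fin n → α),
      (MeasurableEquiv.piFinSuccAbove (fun _ => α) 0).symm p = Fin.cons p.1 p.2 := fun p => by
    simp [MeasurableEquiv.piFinSuccAbove_symm_apply, Fin.insertNthEquiv, Fin.insertNth_zero']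
  have hint := (he.integrable_comp_emb (MeasurableEquiv.measurableEmbedding _)).mpr hf
  rw [Measure.volume_eq_prod] at he hint
  simp only [Function.comp_def, hcons] at hint
  rw [← he.integral_comp (MeasurableEquiv.measurableEmbedding _)]
  simp only [hcons]
  exact integral_prod _ hint

def cornerSimplex (n : ℕ) (s : ℝ) : Set (Fin n → ℝ) := {y | (∀ i, 0 ≤ y i) ∧ ∑ i, y i ≤ s}

namespace cornerSimplex

variable {n : ℕ} {s : ℝ}

theorem eq_iInter_inter :
    cornerSimplex n s = (⋂ i, {y | 0 ≤ y i}) ∩ {y | ∑ i, y i ≤ s} := by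
  ext y
  simp [cornerSimplex]

theorem measurableSet : MeasurableSet (cornerSimplex n s) := by
  rw [eq_iInter_inter]
  exact .inter (.iInter fun i => measurableSet_le measurable_const (measurable_pi_apply i))
    (measurableSet_le (by fun_prop) measurable_const)

theorem isCompact : IsCompact (cornerSimplex n s) := by
  have hclosed : IsClosed (cornerSimplex n s) := by
    rw [eq_iInter_inter]
    exact (isClosed_iInter fun i => isClosed_le continuous_const (continuous_apply i)).inter
      (isClosed_le (by fun_prop) continuous_const)
  refine (isCompact_Icc (a := fun _ => 0) (b := fun _ => s)).of_isClosed_subset hclosed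
    fun y ⟨hy, hsum⟩ => ⟨hy, fun i => ?_⟩
  exact (single_le_sum (fun j _ => hy j) (mem_univ i)).trans hsum

theorem cons_mem_iff {t : ℝ} {z : Fin n → ℝ} :
    Fin.cons t z ∈ cornerSimplex (n + 1) s ↔ t ∈ Icc 0 s ∧ z ∈ cornerSimplex n (s - t) := by
  have hz : (∀ i, 0 ≤ z i) → 0 ≤ ∑ i, z i := fun h => sum_nonneg fun i _ => h i
  simp only [cornerSimplex, mem_ofPred_eq, Fin.forall_fin_succ, Fin.sum_univ_succ, Fin.cons_zero,
    Fin.cons_succ, Set.mem_Icc]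
  constructor
  · rintro ⟨⟨ht, hzi⟩, hsum⟩
    exact ⟨⟨ht, by linarith [hz hzi]⟩, hzi, by linarith⟩
  · rintro ⟨⟨ht, -⟩, hzi, hsum⟩
    exact ⟨⟨ht, hzi⟩, by linarith⟩

theorem setIntegral_succ {E : Type*} [NormedAddCommGroup E] [NormedSpace ℝ E]
    {f : (Fin (n + 1) → ℝ) → E} (hf : IntegrableOn f (cornerSimplex (n + 1) s)) :
    ∫ y in cornerSimplex (n + 1) s, f y
      = ∫ t in Icc 0 s, ∫ z in cornerSimplex n (s - t), f (Fin.cons t z) := by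
  rw [← integral_indicator measurableSet, integral_fin_cons (hf.integrable_indicator measurableSet),
    ← integral_indicator measurableSet_Icc]
  congr 1 with t
  by_cases ht : t ∈ Icc 0 s
  · rw [indicator_of_mem ht, ← integral_indicator measurableSet]
    congr 1 with z
    by_cases hz : z ∈ cornerSimplex n (s - t)
    · rw [indicator_of_mem hz, indicator_of_mem (cons_mem_iff.mpr ⟨ht, hz⟩)]
    · rw [indicator_of_notMem hz, indicator_of_notMem fun h => hz (cons_mem_iff.mp h).2]
  · simp [cons_mem_iff, ht]

theorem setIntegral_prod_pow_mul_sub_sum_pow (a : Fin n → ℕ) (b : ℕ) (hs : 0 ≤ s) :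
    ∫ y in cornerSimplex n s, (∏ i, y i ^ a i) * (s - ∑ i, y i) ^ b
      = s ^ (n + ∑ i, a i + b) * ((∏ i, ((a i)! : ℝ)) * b !) / (n + ∑ i, a i + b)! := by
  induction n generalizing s with
  | zero =>
    have huniv : cornerSimplex 0 s = univ := by ext; simp [cornerSimplex, hs]
    simp [huniv, measureReal_def, volume_pi, Nat.factorial_ne_zero]
  | succ n ih =>
    set M := n + ∑ i, a (Fin.succ i) + b
    have hslice : ∀ t ∈ Icc 0 s, ∫ z in cornerSimplex n (s - t),
        (∏ i, (Fin.cons t z : Fin (n + 1) → ℝ) i ^ a i)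
          * (s - ∑ i, (Fin.cons t z : Fin (n + 1) → ℝ) i) ^ b
          = (∏ i, ((a (Fin.succ i))! : ℝ)) * b ! / M ! * (t ^ a 0 * (s - t) ^ M) := by
      intro t ht
      simp only [Fin.prod_univ_succ, Fin.sum_univ_succ, Fin.cons_zero, Fin.cons_succ,
        ← sub_sub, mul_assoc]
      rw [integral_const_mul, ih (fun i => a (Fin.succ i)) (sub_nonneg.mpr ht.2)]
      ring
    have hcont : Continuous fun y : Fin (n + 1) → ℝ => (∏ i, y i ^ a i) * (s - ∑ i, y i) ^ b := by
      fun_prop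
    rw [setIntegral_succ (hcont.continuousOn.integrableOn_compact isCompact),
      setIntegral_congr_fun measurableSet_Icc hslice, integral_const_mul,
      integral_Icc_eq_integral_Ioc, ← intervalIntegral.integral_of_le hs,
      integral_pow_mul_sub_pow, Fin.sum_univ_succ, Fin.prod_univ_succ,
      show n + 1 + (a 0 + ∑ i, a (Fin.succ i)) + b = a 0 + M + 1 by omega]
    field_simp

end cornerSimplex

section Algebra

variable {R : Type*} [CommRing R]

theorem prod_Ioi_sub_sq_eq_sum_sign_mul_sign {N : ℕ} (x : Fin N → R) :
    ∏ i, ∏ j ∈ Ioi i, (x i - x j) ^ 2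
      = ∑ σ : Perm (Fin N), ∑ τ : Perm (Fin N),
          (Perm.sign σ : R) * Perm.sign τ * ∏ i, x i ^ ((σ i : ℕ) + τ i) := by
  have hdet : (Matrix.vandermonde x).det
      = ∑ σ : Perm (Fin N), (Perm.sign σ : R) * ∏ i, x i ^ (σ i : ℕ) := by
    rw [← Matrix.det_transpose, Matrix.det_apply']
    rfl
  calc ∏ i, ∏ j ∈ Ioi i, (x i - x j) ^ 2 = (Matrix.vandermonde x).det ^ 2 := by
        simp only [Matrix.det_vandermonde, ← Finset.prod_pow]
        exact prod_congr rfl fun i _ => prod_congr rfl fun j _ => by ring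
    _ = _ := by
        rw [hdet, sq, sum_mul_sum]
        refine sum_congr rfl fun σ _ => sum_congr rfl fun τ _ => ?_
        simp only [pow_add, prod_mul_distrib]
        ring

theorem sum_sign_mul_sign_mul_prod {n : Type*} [Fintype n] [DecidableEq n] (f : n → n → R) :
    ∑ σ : Perm n, ∑ τ : Perm n, (Perm.sign σ : R) * Perm.sign τ * ∏ i, f (σ i) (τ i)
      = (Fintype.card n)! * (Matrix.of f).det := by
  have hrow : ∀ σ : Perm n, ∑ τ : Perm n, (Perm.sign τ : R) * ∏ i, f (σ i) (τ i)
      = Perm.sign σ * (Matrix.of f).det := fun σ => by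
    rw [← Matrix.det_permute, ← Matrix.det_transpose, Matrix.det_apply']
    rfl
  calc _ = ∑ σ : Perm n, (Perm.sign σ : R) * (Perm.sign σ * (Matrix.of f).det) := by
        simp only [← hrow, mul_sum, mul_assoc]
    _ = ∑ _σ : Perm n, (Matrix.of f).det := by
        simp only [← mul_assoc, ← Int.cast_mul, ← Units.val_mul, Int.units_mul_self, Units.val_one,
          Int.cast_one, one_mul]
    _ = _ := by simp [Fintype.card_perm]

theorem sum_add_choose_mul_choose {i j N : ℕ} (hj : j < N) :
    ∑ k ∈ range N, i.choose k * j.choose k = (i + j).choose j := by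
  rw [Nat.add_choose_eq, Nat.sum_antidiagonal_eq_sum_range_succ_mk,
    ← sum_subset (range_subset_range.mpr hj)]
  · exact sum_congr rfl fun k hk => by rw [Nat.choose_symm (Nat.lt_succ_iff.mp (mem_range.mp hk))]
  · intro k _ hk
    rw [Nat.choose_eq_zero_of_lt (n := j) (by simpa using hk), mul_zero]

theorem det_factorial_add {N : ℕ} :
    (Matrix.of fun i j : Fin N => (((i + j : ℕ))! : R)).det
      = (∏ k ∈ range N, (k ! : R)) ^ 2 := by
  let L : Matrix (Fin N) (Fin N) R := Matrix.of fun i k => ((i : ℕ)! * (i : ℕ).choose k : ℕ)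
  have hL : (Matrix.of fun i j : Fin N => (((i + j : ℕ))! : R)) = L * L.transpose := by
    ext i j
    simp only [Matrix.of_apply, Matrix.mul_apply, Matrix.transpose_apply, L]
    rw [← Nat.add_choose_mul_factorial_mul_factorial, ← sum_add_choose_mul_choose j.isLt,
      ← Fin.sum_univ_eq_sum_range (fun k => (i : ℕ).choose k * (j : ℕ).choose k)]
    push_cast
    rw [sum_mul, sum_mul]
    exact sum_congr rfl fun k _ => by ring
  have hLdet : L.det = ∏ k ∈ range N, (k ! : R) := by
    rw [Matrix.det_of_isLowerTriangular L fun i k (hik : i < k) => by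
        simp [L, Nat.choose_eq_zero_of_lt hik], ← Fin.prod_univ_eq_prod_range]
    simp [L]
  rw [hL, Matrix.det_mul, Matrix.det_transpose, hLdet, sq]

theorem sum_val_perm_add_val_perm {N : ℕ} (σ τ : Perm (Fin N)) :
    ∑ i, ((σ i : ℕ) + τ i) = N * (N - 1) := by
  rw [sum_add_distrib, Equiv.sum_comp σ (fun i => (i : ℕ)), Equiv.sum_comp τ (fun i => (i : ℕ)),
    ← two_mul, Fin.sum_univ_eq_sum_range (fun i => i), mul_comm, sum_range_id_mul_two]

end Algebra

section xOf

variable {n : ℕ}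

@[fun_prop]
theorem continuous_xOf (i : Fin (n + 1)) :
    Continuous fun y : Fin n → ℝ => xOf (N := n + 1) y i := by
  unfold xOf
  split_ifs <;> fun_prop

theorem xOf_castSucc (y : Fin n → ℝ) (i : Fin n) : xOf (N := n + 1) y i.castSucc = y i := by
  simp [xOf]

theorem xOf_last (y : Fin n → ℝ) : xOf (N := n + 1) y (Fin.last n) = 1 - ∑ j, y j := by
  simp [xOf]

theorem setIntegral_cornerSimplex_prod_xOf_pow (e : Fin (n + 1) → ℕ) :
    ∫ y in cornerSimplex n 1, ∏ i, xOf (N := n + 1) y i ^ e i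
      = (∏ i, ((e i)! : ℝ)) / (n + ∑ i, e i)! := by
  simp only [Fin.prod_univ_castSucc, xOf_castSucc, xOf_last]
  rw [cornerSimplex.setIntegral_prod_pow_mul_sub_sum_pow _ _ zero_le_one, one_pow, one_mul,
    Fin.sum_univ_castSucc, add_assoc]

end xOf

theorem integral_vandermonde_sq_over_simplex_general (N : ℕ) :
    (∫ y in {y : Fin (N - 1) → ℝ | (∀ i, 0 ≤ y i) ∧ ∑ i, y i ≤ 1},
        ∏ i : Fin N, ∏ j ∈ Finset.Ioi i, (xOf y i - xOf y j) ^ 2)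
      = (N.factorial : ℝ) * (∏ k ∈ Finset.range N, (Nat.factorial k : ℝ)) ^ 2
          / (Nat.factorial (N ^ 2 - 1) : ℝ) := by
  rcases N with _ | n
  · simp [measureReal_def, volume_pi]
  have hdeg : ∀ σ τ : Perm (Fin (n + 1)), n + ∑ i, ((σ i : ℕ) + τ i) = (n + 1) ^ 2 - 1 :=
    fun σ τ => by
      rw [sum_val_perm_add_val_perm, Nat.add_sub_cancel]
      exact Nat.eq_sub_of_add_eq (by ring)
  have hint : ∀ σ τ : Perm (Fin (n + 1)), IntegrableOn (fun y : Fin n → ℝ =>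
      (Perm.sign σ : ℝ) * Perm.sign τ * ∏ i, xOf (N := n + 1) y i ^ ((σ i : ℕ) + τ i))
      (cornerSimplex n 1) := fun σ τ =>
    (by fun_prop : Continuous _).continuousOn.integrableOn_compact cornerSimplex.isCompact
  change ∫ y in cornerSimplex n 1, _ = _
  simp_rw [prod_Ioi_sub_sq_eq_sum_sign_mul_sign]
  rw [integral_finsetSum _ fun σ _ => integrable_finsetSum _ fun τ _ => hint σ τ]
  simp_rw [integral_finsetSum _ fun τ _ => hint _ τ, integral_const_mul,
    setIntegral_cornerSimplex_prod_xOf_pow, hdeg, mul_div_assoc', ← sum_div]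
  rw [sum_sign_mul_sign_mul_prod (fun a b : Fin (n + 1) => (((a + b : ℕ))! : ℝ)),
    det_factorial_add, Fintype.card_fin]

theorem integral_vandermonde_sq_over_simplex (N : ℕ) (hN : 1 ≤ N) :
    (∫ y in {y : Fin (N - 1) → ℝ | (∀ i, 0 ≤ y i) ∧ ∑ i, y i ≤ 1},
        ∏ i : Fin N, ∏ j ∈ Finset.Ioi i, (xOf y i - xOf y j) ^ 2)
      = (N.factorial : ℝ) * (∏ k ∈ Finset.range N, (Nat.factorial k : ℝ)) ^ 2
          / (Nat.factorial (N ^ 2 - 1) : ℝ) :=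
  integral_vandermonde_sq_over_simplex_general N
end

section
/- The convolution of measures H_{(-2,2)} ⋆ H_{(-2,0)} ⋆ H_{(-2,-2)} ⋆ H_{(0,-2)} on ℝ² is absolutely continuous with respect to the 2-dimensional Lebesgue measure, with density the function p; that is, this convolution equals the Lebesgue measure on ℝ² weighted by the density p(r,s). -/
open MeasureTheory

/-- The piecewise-polynomial density `p(r,s)`. -/
noncomputable def pDen (r s : ℝ) : ℝ :=
  if 0 ≤ s ∧ s ≤ -r then (r + s) ^ 2 / 64
  else if r ≤ s ∧ s ≤ 0 then (r ^ 2 + 2 * r * s - s ^ 2) / 64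
  else if s ≤ r ∧ r ≤ 0 then r ^ 2 / 32
  else 0

/-- `H_v`: the pushforward of Lebesgue measure on `[0, ∞)` under `t ↦ t • v`,
regarded as a measure on `ℝ²`. -/
noncomputable def Hmeas (v : ℝ × ℝ) : Measure (ℝ × ℝ) :=
  Measure.map (fun t : ℝ => t • v) (volume.restrict (Set.Ici (0 : ℝ)))

/-!
Pairing the four factors, `H_u ⋆ H_v` is the image of Lebesgue measure on the quadrant
`[0,∞)²` under `(a, b) ↦ a • u + b • v`. For both pairs this map has determinant `4`, so
`H_{(-2,2)} ⋆ H_{(-2,0)} = ¼ λ|C₁` and `H_{(-2,-2)} ⋆ H_{(0,-2)} = ¼ λ|C₂` for the cones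
`C₁ = {0 ≤ y, x + y ≤ 0}` and `C₂ = {x ≤ 0, y ≤ x}`. Hence the convolution has density
`z ↦ λ(C₁ ∩ (z - C₂)) / 16`. By Fubini over horizontal slices, the slice of `C₁ ∩ ((r, s) - C₂)`
at height `y ≥ 0` is an interval of length `(min (-y - r) (y - s))⁺`, a tent in `y`, and
integrating it over `y ≥ 0` gives `16 p(r, s)`.
-/

open Set

lemma map_restrict_preimage_linearMap {E : Type*} [NormedAddCommGroup E] [NormedSpace ℝ E]
    [MeasurableSpace E] [BorelSpace E] [FiniteDimensional ℝ E] (μ : Measure E)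
    [μ.IsAddHaarMeasure] {f : E →ₗ[ℝ] E} (hf : LinearMap.det f ≠ 0) {s : Set E}
    (hs : MeasurableSet s) :
    (μ.restrict (f ⁻¹' s)).map f = ENNReal.ofReal |(LinearMap.det f)⁻¹| • μ.restrict s := by
  rw [← Measure.restrict_map f.continuous_of_finiteDimensional.measurable hs,
    Measure.map_linearMap_addHaar_eq_smul_addHaar μ hf, Measure.restrict_smul]

lemma lconvolution_indicator_one {G : Type*} [AddGroup G] [MeasurableSpace G] [MeasurableAdd G]
    [MeasurableNeg G] (μ : Measure G) {s t : Set G} (hs : MeasurableSet s) (ht : MeasurableSet t)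
    (z : G) : (s.indicator 1 ⋆ₗ[μ] t.indicator 1) z = μ (s ∩ (fun w => -w + z) ⁻¹' t) := by
  rw [lconvolution_def, ← lintegral_indicator_one (hs.inter (ht.preimage (by fun_prop))),
    inter_indicator_one]
  rfl

noncomputable def linComb (u v : ℝ × ℝ) : ℝ × ℝ →ₗ[ℝ] ℝ × ℝ :=
  (LinearMap.toSpanSingleton ℝ _ u).coprod (LinearMap.toSpanSingleton ℝ _ v)

@[simp]
lemma linComb_apply (u v : ℝ × ℝ) (a : ℝ × ℝ) : linComb u v a = a.1 • u + a.2 • v := rfl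

lemma det_linComb (u v : ℝ × ℝ) : LinearMap.det (linComb u v) = u.1 * v.2 - u.2 * v.1 := by
  rw [← LinearMap.det_toMatrix (Module.Basis.finTwoProd ℝ), Matrix.det_fin_two]
  simp [LinearMap.toMatrix_apply]
  ring

instance (v : ℝ × ℝ) : SFinite (Hmeas v) := by
  unfold Hmeas; infer_instance

lemma Hmeas_conv_Hmeas (u v : ℝ × ℝ) :
    (Hmeas u).conv (Hmeas v) = (volume.restrict (Ici 0 ×ˢ Ici 0)).map (linComb u v) := by
  rw [Measure.conv, Hmeas, Hmeas, Measure.map_prod_map _ _ (by fun_prop) (by fun_prop),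
    Measure.map_map (by fun_prop) (by fun_prop), Measure.volume_eq_prod, Measure.prod_restrict]
  rfl

lemma Hmeas_conv_Hmeas_eq_smul_restrict {u v : ℝ × ℝ} {C : Set (ℝ × ℝ)}
    (hdet : LinearMap.det (linComb u v) ≠ 0) (hC : MeasurableSet C)
    (hpre : linComb u v ⁻¹' C = Ici 0 ×ˢ Ici 0) :
    (Hmeas u).conv (Hmeas v)
      = ENNReal.ofReal |(LinearMap.det (linComb u v))⁻¹| • volume.restrict C := by
  rw [Hmeas_conv_Hmeas, ← hpre, map_restrict_preimage_linearMap volume hdet hC]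

def cone₁ : Set (ℝ × ℝ) := {z | 0 ≤ z.2 ∧ z.1 + z.2 ≤ 0}

def cone₂ : Set (ℝ × ℝ) := {z | z.1 ≤ 0 ∧ z.2 ≤ z.1}

lemma measurableSet_cone₁ : MeasurableSet cone₁ :=
  (measurableSet_le measurable_const measurable_snd).inter
    (measurableSet_le (measurable_fst.add measurable_snd) measurable_const)

lemma measurableSet_cone₂ : MeasurableSet cone₂ :=
  (measurableSet_le measurable_fst measurable_const).inter
    (measurableSet_le measurable_snd measurable_fst)

lemma linComb_preimage_cone₁ : linComb (-2, 2) (-2, 0) ⁻¹' cone₁ = Ici 0 ×ˢ Ici 0 := by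
  ext ⟨a, b⟩
  simp [cone₁]

lemma linComb_preimage_cone₂ : linComb (-2, -2) (0, -2) ⁻¹' cone₂ = Ici 0 ×ˢ Ici 0 := by
  ext ⟨a, b⟩
  simp [cone₂]

noncomputable def sliceLength (r s y : ℝ) : ℝ := max (min (-y - r) (y - s)) 0

lemma continuous_sliceLength (r s : ℝ) : Continuous (sliceLength r s) := by
  unfold sliceLength; fun_prop

lemma sliceLength_eq_zero_of_neg_le {r s y : ℝ} (h : -r ≤ y) : sliceLength r s y = 0 := by
  unfold sliceLength; grind

lemma integral_sliceLength_of_eqOn {r s a b c d : ℝ} (hab : a ≤ b)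
    (h : ∀ y ∈ Icc a b, sliceLength r s y = c * y + d) :
    ∫ y in a..b, sliceLength r s y = c * (b ^ 2 - a ^ 2) / 2 + d * (b - a) := by
  rw [intervalIntegral.integral_congr (g := fun y => c * y + d) (by rwa [uIcc_of_le hab]),
    intervalIntegral.integral_add ((continuous_const_mul c).intervalIntegrable _ _)
      intervalIntegrable_const, intervalIntegral.integral_const_mul, integral_id,
    intervalIntegral.integral_const, smul_eq_mul]
  ring

lemma integral_sliceLength_split {r s : ℝ} (a b c : ℝ) :
    ∫ y in a..c, sliceLength r s y
      = (∫ y in a..b, sliceLength r s y) + ∫ y in b..c, sliceLength r s y :=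
  (intervalIntegral.integral_add_adjacent_intervals
    ((continuous_sliceLength r s).intervalIntegrable _ _)
    ((continuous_sliceLength r s).intervalIntegrable _ _)).symm

/-- `sliceLength r s` is a tent with apex at `(s - r) / 2`; each clause of `pDen` is one position
of the tent relative to `[0, -r]`, and the integral is split at the kinks inside that interval. -/
lemma integral_sliceLength {r s : ℝ} (hr : r ≤ 0) :
    ∫ y in (0 : ℝ)..(-r), sliceLength r s y = 16 * pDen r s := by
  by_cases hA : 0 ≤ s ∧ s ≤ -r
  · rw [integral_sliceLength_split 0 s, integral_sliceLength_split s ((s - r) / 2),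
      integral_sliceLength_of_eqOn (c := 0) (d := 0) hA.1 (by unfold sliceLength; grind),
      integral_sliceLength_of_eqOn (c := 1) (d := -s) (by linarith) (by unfold sliceLength; grind),
      integral_sliceLength_of_eqOn (c := -1) (d := -r) (by linarith) (by unfold sliceLength; grind),
      pDen, if_pos hA]
    ring
  by_cases hB : r ≤ s ∧ s ≤ 0
  · rw [integral_sliceLength_split 0 ((s - r) / 2),
      integral_sliceLength_of_eqOn (c := 1) (d := -s) (by linarith) (by unfold sliceLength; grind),
      integral_sliceLength_of_eqOn (c := -1) (d := -r) (by linarith) (by unfold sliceLength; grind),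
      pDen, if_neg hA, if_pos hB]
    ring
  by_cases hC : s ≤ r
  · rw [integral_sliceLength_of_eqOn (c := -1) (d := -r) (by linarith)
        (by unfold sliceLength; grind), pDen, if_neg hA, if_neg hB, if_pos ⟨hC, hr⟩]
    ring
  · rw [integral_sliceLength_of_eqOn (c := 0) (d := 0) (by linarith) (by unfold sliceLength; grind),
      pDen, if_neg hA, if_neg hB, if_neg (by grind)]
    ring

lemma pDen_eq_zero_of_pos {r : ℝ} (s : ℝ) (hr : 0 < r) : pDen r s = 0 := by
  unfold pDen; grind

lemma lintegral_Ici_sliceLength (r s : ℝ) :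
    ∫⁻ y in Ici 0, ENNReal.ofReal (sliceLength r s y) = ENNReal.ofReal (16 * pDen r s) := by
  have hsupp : (fun y => ENNReal.ofReal (sliceLength r s y))
      = (Iic (-r)).indicator (fun y => ENNReal.ofReal (sliceLength r s y)) := by
    ext y
    by_cases hy : y ≤ -r
    · simp [hy]
    · simp [hy, sliceLength_eq_zero_of_neg_le (le_of_not_ge hy)]
  rw [hsupp, lintegral_indicator measurableSet_Iic, Measure.restrict_restrict measurableSet_Iic,
    Iic_inter_Ici]
  rcases le_or_gt r 0 with hr | hr
  · rw [← integral_sliceLength hr, intervalIntegral.integral_of_le (by linarith),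
      ← integral_Icc_eq_integral_Ioc, ofReal_integral_eq_lintegral_ofReal
        (continuous_sliceLength r s).integrableOn_Icc (ae_of_all _ fun y => le_max_right _ _)]
  · rw [Icc_eq_empty (by linarith), Measure.restrict_empty, lintegral_zero_measure,
      pDen_eq_zero_of_pos s hr, mul_zero, ENNReal.ofReal_zero]

lemma volume_slice_cone₁_inter_sub_cone₂ (z : ℝ × ℝ) (y : ℝ) :
    volume ((fun x => (x, y)) ⁻¹' (cone₁ ∩ (fun w => -w + z) ⁻¹' cone₂))
      = (Ici 0).indicator (fun y => ENNReal.ofReal (sliceLength z.1 z.2 y)) y := by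
  by_cases hy : 0 ≤ y
  · have hslice : (fun x => (x, y)) ⁻¹' (cone₁ ∩ (fun w => -w + z) ⁻¹' cone₂)
        = Icc z.1 (min (-y) (z.1 - z.2 + y)) := by
      ext x
      simp only [cone₁, cone₂, mem_preimage, mem_inter_iff, mem_ofPred_eq, Prod.fst_add,
        Prod.snd_add, Prod.fst_neg, Prod.snd_neg, mem_Icc, le_min_iff]
      grind
    rw [hslice, Real.volume_Icc, indicator_of_mem (mem_Ici.2 hy), sliceLength, ENNReal.ofReal_max,
      ENNReal.ofReal_zero, max_eq_left zero_le, ← min_sub_sub_right]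
    ring_nf
  · have hslice : (fun x => (x, y)) ⁻¹' (cone₁ ∩ (fun w => -w + z) ⁻¹' cone₂) = ∅ :=
      eq_empty_of_forall_notMem fun x hx => hy hx.1.1
    rw [hslice, measure_empty, indicator_of_notMem (fun h => hy (mem_Ici.1 h))]

lemma volume_cone₁_inter_sub_cone₂ (z : ℝ × ℝ) :
    volume (cone₁ ∩ (fun w => -w + z) ⁻¹' cone₂) = ENNReal.ofReal (16 * pDen z.1 z.2) := by
  rw [Measure.volume_eq_prod, Measure.prod_apply_symm
      (measurableSet_cone₁.inter (measurableSet_cone₂.preimage (by fun_prop))),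
    ← lintegral_Ici_sliceLength, ← lintegral_indicator measurableSet_Ici]
  exact lintegral_congr (volume_slice_cone₁_inter_sub_cone₂ z)

theorem conv_Hmeas_eq_withDensity_pDen :
    (Hmeas (-2, 2)).conv ((Hmeas (-2, 0)).conv ((Hmeas (-2, -2)).conv (Hmeas (0, -2))))
      = (volume : Measure (ℝ × ℝ)).withDensity
          (fun z => ENNReal.ofReal (pDen z.1 z.2)) := by
  have hdet₁ : LinearMap.det (linComb (-2, 2) (-2, 0)) = 4 := by rw [det_linComb]; norm_num
  have hdet₂ : LinearMap.det (linComb (-2, -2) (0, -2)) = 4 := by rw [det_linComb]; norm_num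
  rw [← Measure.conv_assoc,
    Hmeas_conv_Hmeas_eq_smul_restrict (by simp [hdet₁]) measurableSet_cone₁ linComb_preimage_cone₁,
    Hmeas_conv_Hmeas_eq_smul_restrict (by simp [hdet₂]) measurableSet_cone₂ linComb_preimage_cone₂,
    hdet₁, hdet₂,
    Measure.conv_smul_left, Measure.conv_smul_right,
    ← withDensity_indicator_one measurableSet_cone₁, ← withDensity_indicator_one measurableSet_cone₂,
    conv_withDensity_eq_lconvolution (measurable_one.indicator measurableSet_cone₁)
      (measurable_one.indicator measurableSet_cone₂), smul_smul,
    ← withDensity_smul' _ _ (ENNReal.mul_ne_top ENNReal.ofReal_ne_top ENNReal.ofReal_ne_top)]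
  congr 1
  funext z
  rw [Pi.smul_apply, lconvolution_indicator_one _ measurableSet_cone₁ measurableSet_cone₂,
    volume_cone₁_inter_sub_cone₂, smul_eq_mul, ← ENNReal.ofReal_mul (abs_nonneg _),
    ← ENNReal.ofReal_mul (by positivity)]
  congr 1
  norm_num
  ring
end

section
/- Let λ̂₁ > λ̂₂ > λ̂₃ > λ̂₄ be reals with λ̂₁+λ̂₂+λ̂₃+λ̂₄ = 0, and set c₃ = 2(λ̂₁+λ̂₂), c₂ = 2(λ̂₁+λ̂₃), c₁ = 2|λ̂₁+λ̂₄|. Then for every x ∈ [0, c₁], ∫_{0}^{∞} x·y·( p(x−c₁, y−c₃) − p(x−c₁, y−c₂) ) dy = ((c₃² − c₂²)/64) · x · (x − c₁)², and for every x ≥ c₁ the same integral equals 0. -/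
/-!
For `r = x - c₁ ≤ 0` and `-r ≤ c`, the function `y ↦ y · p(r, y - c)` is a cubic polynomial on
each of `[0, c + r]`, `[c + r, c]`, `[c, c - r]` and vanishes beyond `c - r`, so
`∫₀^∞ y · p(r, y - c) dy = c² r² / 64 + r⁴ / 384`. Since `c₁ ≤ c₂ ≤ c₃`, this applies to
`c = c₂, c₃` when `0 ≤ x ≤ c₁`, and the `r⁴` terms cancel in the difference. For `x ≥ c₁`
we have `r ≥ 0`, where `p(r, ·)` vanishes identically.
-/

open MeasureTheory

open Set

section pDen

variable {r s : ℝ}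

lemma pDen_eq_zero_of_nonneg (hr : 0 ≤ r) : pDen r s = 0 := by
  unfold pDen; split_ifs <;> (try casesm* _ ∧ _) <;> first | rfl | nlinarith

lemma pDen_eq_zero_of_neg_le (h : -r ≤ s) : pDen r s = 0 := by
  unfold pDen; split_ifs <;> (try casesm* _ ∧ _) <;> first | rfl | nlinarith

lemma pDen_of_le_of_nonpos (hs : s ≤ r) (hr : r ≤ 0) : pDen r s = r ^ 2 / 32 := by
  unfold pDen; split_ifs <;> (try casesm* _ ∧ _) <;> first | rfl | nlinarith | tauto

lemma pDen_of_ge_of_nonpos (hr : r ≤ s) (hs : s ≤ 0) :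
    pDen r s = (r ^ 2 + 2 * r * s - s ^ 2) / 64 := by
  unfold pDen; split_ifs <;> (try casesm* _ ∧ _) <;> first | rfl | nlinarith | tauto

lemma pDen_of_nonneg_of_le_neg (hs : 0 ≤ s) (hsr : s ≤ -r) : pDen r s = (r + s) ^ 2 / 64 := by
  unfold pDen; split_ifs <;> (try casesm* _ ∧ _) <;> first | rfl | nlinarith | tauto

end pDen

lemma intervalIntegrable_and_integral_of_eqOn_cubic {f : ℝ → ℝ} {a b A B C : ℝ}
    (hf : EqOn f (fun y ↦ A * y ^ 3 + B * y ^ 2 + C * y) (uIcc a b)) :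
    IntervalIntegrable f volume a b ∧
      ∫ y in a..b, f y = (A * b ^ 4 / 4 + B * b ^ 3 / 3 + C * b ^ 2 / 2)
        - (A * a ^ 4 / 4 + B * a ^ 3 / 3 + C * a ^ 2 / 2) := by
  have hg : Continuous fun y : ℝ ↦ A * y ^ 3 + B * y ^ 2 + C * y := by fun_prop
  refine ⟨(hg.continuousOn.congr hf).intervalIntegrable, ?_⟩
  rw [intervalIntegral.integral_congr hf]
  refine intervalIntegral.integral_eq_sub_of_hasDerivAt
    (f := fun y ↦ A * y ^ 4 / 4 + B * y ^ 3 / 3 + C * y ^ 2 / 2) (fun y _ ↦ ?_)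
    (hg.intervalIntegrable a b)
  convert (((hasDerivAt_pow 4 y).const_mul (A / 4)).add
    ((hasDerivAt_pow 3 y).const_mul (B / 3))).add ((hasDerivAt_pow 2 y).const_mul (C / 2))
    using 1 <;> first | (ext; simp only [Pi.add_apply]; ring) | (push_cast; ring)

section mulPDen

variable {r c : ℝ}

lemma intervalIntegrable_and_integral_mul_pDen (hr : r ≤ 0) (hc : -r ≤ c) :
    IntervalIntegrable (fun y ↦ y * pDen r (y - c)) volume 0 (c - r) ∧
      ∫ y in (0 : ℝ)..c - r, y * pDen r (y - c) = c ^ 2 * r ^ 2 / 64 + r ^ 4 / 384 := by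
  set f : ℝ → ℝ := fun y ↦ y * pDen r (y - c)
  obtain ⟨i₁, e₁⟩ := intervalIntegrable_and_integral_of_eqOn_cubic (f := f)
    (a := 0) (b := c + r) (A := 0) (B := 0) (C := r ^ 2 / 32) fun y hy ↦ by
      rw [uIcc_of_le (by linarith)] at hy
      simp only [f, pDen_of_le_of_nonpos (by linarith [hy.2] : y - c ≤ r) hr]; ring
  obtain ⟨i₂, e₂⟩ := intervalIntegrable_and_integral_of_eqOn_cubic (f := f)
    (a := c + r) (b := c) (A := -1 / 64) (B := (r + c) / 32)
    (C := (r ^ 2 - 2 * r * c - c ^ 2) / 64)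
    fun y hy ↦ by
      rw [uIcc_of_le (by linarith)] at hy
      simp only [f, pDen_of_ge_of_nonpos (by linarith [hy.1] : r ≤ y - c) (by linarith [hy.2])]
      ring
  obtain ⟨i₃, e₃⟩ := intervalIntegrable_and_integral_of_eqOn_cubic (f := f)
    (a := c) (b := c - r) (A := 1 / 64) (B := (r - c) / 32) (C := (r - c) ^ 2 / 64)
    fun y hy ↦ by
      rw [uIcc_of_le (by linarith)] at hy
      simp only [f, pDen_of_nonneg_of_le_neg (by linarith [hy.1] : 0 ≤ y - c)
        (by linarith [hy.2] : y - c ≤ -r)]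
      ring
  refine ⟨(i₁.trans i₂).trans i₃, ?_⟩
  rw [← intervalIntegral.integral_add_adjacent_intervals (i₁.trans i₂) i₃,
    ← intervalIntegral.integral_add_adjacent_intervals i₁ i₂, e₁, e₂, e₃]
  ring

lemma mul_pDen_sub_eq_zero {y : ℝ} (hy : c - r ≤ y) : y * pDen r (y - c) = 0 := by
  rw [pDen_eq_zero_of_neg_le (by linarith), mul_zero]

lemma integrableOn_Ici_mul_pDen (hr : r ≤ 0) (hc : -r ≤ c) :
    IntegrableOn (fun y ↦ y * pDen r (y - c)) (Ici 0) := by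
  refine ((intervalIntegrable_iff_integrableOn_Icc_of_le (by linarith)).mp
    (intervalIntegrable_and_integral_mul_pDen hr hc).1).of_forall_sdiff_eq_zero
    measurableSet_Ici
    fun y hy ↦ mul_pDen_sub_eq_zero (not_le.1 fun h ↦ hy.2 ⟨hy.1, h⟩).le

lemma setIntegral_Ici_mul_pDen (hr : r ≤ 0) (hc : -r ≤ c) :
    ∫ y in Ici 0, y * pDen r (y - c) = c ^ 2 * r ^ 2 / 64 + r ^ 4 / 384 := by
  rw [setIntegral_eq_of_subset_of_forall_sdiff_eq_zero measurableSet_Ici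
    (Icc_subset_Ici_self : Icc 0 (c - r) ⊆ Ici 0)
    fun y hy ↦ mul_pDen_sub_eq_zero (not_le.1 fun h ↦ hy.2 ⟨hy.1, h⟩).le,
    integral_Icc_eq_integral_Ioc, ← intervalIntegral.integral_of_le (by linarith),
    (intervalIntegrable_and_integral_mul_pDen hr hc).2]

end mulPDen

theorem integral_I1 (l1 l2 l3 l4 : ℝ) (h12 : l2 < l1) (h23 : l3 < l2) (h34 : l4 < l3)
    (hsum : l1 + l2 + l3 + l4 = 0)
    (c1 c2 c3 : ℝ) (hc3 : c3 = 2 * (l1 + l2)) (hc2 : c2 = 2 * (l1 + l3))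
    (hc1 : c1 = 2 * |l1 + l4|) :
    (∀ x : ℝ, 0 ≤ x → x ≤ c1 →
      (∫ y in Set.Ici (0 : ℝ), x * y * (pDen (x - c1) (y - c3) - pDen (x - c1) (y - c2)))
        = (c3 ^ 2 - c2 ^ 2) / 64 * x * (x - c1) ^ 2) ∧
    (∀ x : ℝ, c1 ≤ x →
      (∫ y in Set.Ici (0 : ℝ), x * y * (pDen (x - c1) (y - c3) - pDen (x - c1) (y - c2)))
        = 0) := by
  have hc12 : c1 ≤ c2 := by
    rw [hc1, hc2, mul_le_mul_iff_right₀ two_pos, abs_le]; constructor <;> linarith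
  have hc23 : c2 ≤ c3 := by linarith
  refine ⟨fun x hx0 hxc1 ↦ ?_, fun x hc1x ↦ ?_⟩
  · have hr : x - c1 ≤ 0 := by linarith
    have hc2' : -(x - c1) ≤ c2 := by linarith
    have hc3' : -(x - c1) ≤ c3 := by linarith
    calc ∫ y in Ici 0, x * y * (pDen (x - c1) (y - c3) - pDen (x - c1) (y - c2))
        = x * ((∫ y in Ici 0, y * pDen (x - c1) (y - c3))
            - ∫ y in Ici 0, y * pDen (x - c1) (y - c2)) := by
          rw [← integral_sub (integrableOn_Ici_mul_pDen hr hc3')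
            (integrableOn_Ici_mul_pDen hr hc2'), ← integral_const_mul]
          congr 1 with y; ring
      _ = (c3 ^ 2 - c2 ^ 2) / 64 * x * (x - c1) ^ 2 := by
          rw [setIntegral_Ici_mul_pDen hr hc3', setIntegral_Ici_mul_pDen hr hc2']; ring
  · simp_rw [pDen_eq_zero_of_nonneg (sub_nonneg.2 hc1x), sub_self, mul_zero, integral_zero]
end

section
/- Let λ̂₁ > λ̂₂ > λ̂₃ > λ̂₄ be reals with λ̂₁+λ̂₂+λ̂₃+λ̂₄ = 0, and set c₃ = 2(λ̂₁+λ̂₂), c₂ = 2(λ̂₁+λ̂₃), c₁ = 2|λ̂₁+λ̂₄|. Then for every x ∈ [0, c₃], ∫_{0}^{∞} x·y·( p(x−c₃, y−c₂) + p(x−c₃, y+c₂) − p(x−c₃, y−c₁) − p(x−c₃, y+c₁) ) dy = ((c₂² − c₁²)/64) · x · (x − c₃)². -/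
open MeasureTheory

/-- Closed form for `pDen` when `r ≤ 0`, manifestly continuous in `s`. -/
lemma pDen_closed (r s : ℝ) (hr : r ≤ 0) :
    pDen r s = (r + min (max s r) (-r)) ^ 2 / 64 - (min (min (max s r) (-r)) 0) ^ 2 / 32 := by
  have hrr : r ≤ -r := by linarith
  rcases le_or_gt s r with h | h
  · -- s ≤ r
    rw [max_eq_right h, min_eq_left hrr, min_eq_left hr]
    unfold pDen
    split_ifs with hA hB hC
    · have hs : s = 0 := le_antisymm (h.trans hr) hA.1
      have hr0 : r = 0 := le_antisymm hr (hs ▸ h)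
      subst hs; subst hr0; norm_num
    · have hs : s = r := le_antisymm h hB.1
      subst hs; ring
    · ring
    · exact absurd ⟨h, hr⟩ hC
  · rcases le_or_gt s 0 with h2 | h2
    · -- r < s ≤ 0
      rw [max_eq_left h.le, min_eq_left (by linarith), min_eq_left h2]
      unfold pDen
      split_ifs with hA hB hC
      · have hs : s = 0 := le_antisymm h2 hA.1
        subst hs; ring
      · ring
      · exact absurd hC.1 (not_le.2 h)
      · exact absurd ⟨h.le, h2⟩ hB
    · rcases le_or_gt s (-r) with h3 | h3
      · -- 0 < s ≤ -r
        rw [max_eq_left (by linarith), min_eq_left h3, min_eq_right (by linarith)]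
        unfold pDen
        rw [if_pos ⟨h2.le, h3⟩]; ring
      · -- -r < s
        rw [max_eq_left (by linarith), min_eq_right h3.le, min_eq_right (by linarith)]
        unfold pDen
        rw [if_neg (fun hc => absurd hc.2 (not_le.2 h3)),
          if_neg (fun hc => by linarith [hc.2]),
          if_neg (fun hc => by linarith [hc.1])]
        ring

lemma pDen_zero_of_ge (r s : ℝ) (hr : r ≤ 0) (hs : -r ≤ s) : pDen r s = 0 := by
  rw [pDen_closed r s hr]
  have h1 : max s r = s := max_eq_left (by linarith)
  have h2 : min s (-r) = -r := min_eq_right hs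
  rw [h1, h2]
  have h3 : min (-r) 0 = 0 := min_eq_right (by linarith)
  rw [h3]; ring

lemma cont_slice (a c : ℝ) (ha : 0 ≤ a) :
    Continuous (fun y : ℝ => y * pDen (-a) (y + c)) := by
  have h : (fun y : ℝ => y * pDen (-a) (y + c)) =
      fun y : ℝ => y * ((-a + min (max (y + c) (-a)) a) ^ 2 / 64
        - (min (min (max (y + c) (-a)) a) 0) ^ 2 / 32) := by
    funext y
    rw [pDen_closed (-a) (y + c) (by linarith)]
    norm_num
  rw [h]
  fun_prop

lemma poly_int (A B C D u v : ℝ) :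
    ∫ y in u..v, (A * y ^ 3 + B * y ^ 2 + C * y + D) =
      A * (v ^ 4 - u ^ 4) / 4 + B * (v ^ 3 - u ^ 3) / 3 + C * (v ^ 2 - u ^ 2) / 2 + D * (v - u) := by
  have h : ∀ y : ℝ, HasDerivAt (fun y : ℝ => A * y ^ 4 / 4 + B * y ^ 3 / 3 + C * y ^ 2 / 2 + D * y)
      (A * y ^ 3 + B * y ^ 2 + C * y + D) y := by
    intro y
    have h1 := (((hasDerivAt_pow 4 y).const_mul A).div_const 4).add
      (((hasDerivAt_pow 3 y).const_mul B).div_const 3)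
    have h2 := h1.add (((hasDerivAt_pow 2 y).const_mul C).div_const 2)
    have h3 := h2.add ((hasDerivAt_id y).const_mul D)
    have he : A * y ^ 3 + B * y ^ 2 + C * y + D
        = A * (↑4 * y ^ (4 - 1)) / 4 + B * (↑3 * y ^ (3 - 1)) / 3 + C * (↑2 * y ^ (2 - 1)) / 2
          + D * 1 := by push_cast; ring
    rw [he]
    exact h3
  rw [intervalIntegral.integral_eq_sub_of_hasDerivAt (fun y _ => h y)
    ((by fun_prop : Continuous fun y : ℝ => A * y ^ 3 + B * y ^ 2 + C * y + D).intervalIntegrable u v)]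
  ring

/-- Reduce an integral over `Ici 0` to an interval integral when `f` vanishes beyond `T`. -/
lemma reduce_Ici (f : ℝ → ℝ) (T : ℝ) (hT : 0 ≤ T) (hf : Continuous f)
    (h0 : ∀ y, T < y → f y = 0) :
    ∫ y in Set.Ici (0 : ℝ), f y = ∫ y in (0 : ℝ)..T, f y := by
  have hz : ∫ y in Set.Ioi T, f y = 0 :=
    MeasureTheory.setIntegral_eq_zero_of_forall_eq_zero (fun y hy => h0 y hy)
  rw [MeasureTheory.integral_Ici_eq_integral_Ioi,
    show Set.Ioi (0 : ℝ) = Set.Ioc 0 T ∪ Set.Ioi T from (Set.Ioc_union_Ioi_eq_Ioi hT).symm,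
    MeasureTheory.setIntegral_union (Set.Ioc_disjoint_Ioi le_rfl) measurableSet_Ioi
      (hf.integrableOn_Ioc)
      ((integrableOn_congr_fun (fun y hy => h0 y hy) measurableSet_Ioi).mpr (integrableOn_zero)),
    hz, add_zero]
  exact (intervalIntegral.integral_of_le hT).symm

lemma integrableOn_slice (a c : ℝ) (ha : 0 ≤ a) :
    IntegrableOn (fun y : ℝ => y * pDen (-a) (y + c)) (Set.Ici 0) := by
  set T : ℝ := max (a - c) 0 with hT
  have hT0 : (0 : ℝ) ≤ T := le_max_right _ _
  rw [show Set.Ici (0 : ℝ) = Set.Icc 0 T ∪ Set.Ioi T from (Set.Icc_union_Ioi_eq_Ici hT0).symm]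
  apply MeasureTheory.IntegrableOn.union
  · exact (cont_slice a c ha).continuousOn.integrableOn_Icc
  · refine (integrableOn_congr_fun (fun y hy => ?_) measurableSet_Ioi).mpr integrableOn_zero
    have : a - c < y := lt_of_le_of_lt (le_max_left _ _) hy
    rw [pDen_zero_of_ge (-a) (y + c) (by linarith) (by simp; linarith), mul_zero]

lemma Lplus (a c : ℝ) (ha : 0 ≤ a) (hc : 0 ≤ c) :
    ∫ y in Set.Ici (0 : ℝ), y * pDen (-a) (y + c) = (max (a - c) 0) ^ 4 / 768 := by
  rcases le_total c a with h | h
  · -- c ≤ a : integrate over [0, a - c]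
    rw [reduce_Ici _ (a - c) (by linarith) (cont_slice a c ha)
      (fun y hy => by rw [pDen_zero_of_ge (-a) (y + c) (by linarith) (by simp; linarith), mul_zero])]
    have hp : ∫ y in (0:ℝ)..(a - c), y * pDen (-a) (y + c)
        = ∫ y in (0:ℝ)..(a - c), ((1:ℝ)/64 * y ^ 3 + (2 * (c - a) / 64) * y ^ 2
            + ((a - c) ^ 2 / 64) * y + 0) := by
      apply intervalIntegral.integral_congr
      intro y hy
      rw [Set.uIcc_of_le (by linarith)] at hy
      obtain ⟨hy1, hy2⟩ := hy
      have h1 : pDen (-a) (y + c) = (-a + (y + c)) ^ 2 / 64 := by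
        unfold pDen
        rw [if_pos ⟨by linarith, by simp; linarith⟩]
      simp only [h1]; ring
    rw [hp, poly_int, max_eq_left (by linarith)]
    ring
  · -- a ≤ c : integrand vanishes on Ici 0
    rw [MeasureTheory.setIntegral_eq_zero_of_forall_eq_zero (fun y hy => ?_),
      max_eq_right (by linarith)]
    · norm_num
    · have hy0 : (0:ℝ) ≤ y := hy
      rw [pDen_zero_of_ge (-a) (y + c) (by linarith) (by simp; linarith), mul_zero]

lemma Lminus (a c : ℝ) (ha : 0 ≤ a) (hc : 0 ≤ c) :
    ∫ y in Set.Ici (0 : ℝ), y * pDen (-a) (y - c)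
      = a ^ 4 / 384 + a ^ 2 * c ^ 2 / 64 - (max (a - c) 0) ^ 4 / 768 := by
  have hcont : Continuous (fun y : ℝ => y * pDen (-a) (y - c)) := by
    have := cont_slice a (-c) ha
    simpa [sub_eq_add_neg] using this
  rw [reduce_Ici _ (c + a) (by linarith) hcont
    (fun y hy => by rw [pDen_zero_of_ge (-a) (y - c) (by linarith) (by simp; linarith), mul_zero])]
  have hii : ∀ u v : ℝ, IntervalIntegrable (fun y : ℝ => y * pDen (-a) (y - c)) volume u v :=
    fun u v => hcont.intervalIntegrable u v
  have hmid : ∀ y : ℝ, 0 ≤ y → c - a ≤ y → y ≤ c →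
      y * pDen (-a) (y - c) = -(1/64) * y ^ 3 + (2 * (c - a) / 64) * y ^ 2
        + ((a ^ 2 + 2 * a * c - c ^ 2) / 64) * y + 0 := by
    intro y hy0 hy1 hy2
    have h1 : pDen (-a) (y - c) = ((-a) ^ 2 + 2 * (-a) * (y - c) - (y - c) ^ 2) / 64 := by
      unfold pDen
      rcases lt_or_eq_of_le hy2 with h | h
      · rw [if_neg (fun hcon => by linarith [hcon.1]), if_pos ⟨by linarith, by linarith⟩]
      · subst h
        rw [if_pos ⟨by linarith, by simp; linarith⟩]; ring
    rw [h1]; ring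
  have hright : ∀ y : ℝ, c ≤ y → y ≤ c + a →
      y * pDen (-a) (y - c) = (1/64) * y ^ 3 + (-2 * (c + a) / 64) * y ^ 2
        + ((c + a) ^ 2 / 64) * y + 0 := by
    intro y hy1 hy2
    have h1 : pDen (-a) (y - c) = (-a + (y - c)) ^ 2 / 64 := by
      unfold pDen
      rw [if_pos ⟨by linarith, by simp; linarith⟩]
    rw [h1]; ring
  rcases le_total a c with h | h
  · -- a ≤ c : three pieces [0, c-a], [c-a, c], [c, c+a]
    have p1 : ∫ y in (0:ℝ)..(c - a), y * pDen (-a) (y - c)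
        = ∫ y in (0:ℝ)..(c - a), ((0:ℝ) * y ^ 3 + 0 * y ^ 2 + (a ^ 2 / 32) * y + 0) := by
      apply intervalIntegral.integral_congr
      intro y hy
      rw [Set.uIcc_of_le (by linarith)] at hy
      obtain ⟨hy1, hy2⟩ := hy
      have h1 : pDen (-a) (y - c) = (-a) ^ 2 / 32 := by
        unfold pDen
        rcases lt_or_eq_of_le hy2 with hlt | heq
        · rw [if_neg (fun hcon => by linarith [hcon.1]),
            if_neg (fun hcon => by linarith [hcon.1]), if_pos ⟨by linarith, by linarith⟩]
        · rcases eq_or_lt_of_le ha with ha0 | ha0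
          · rw [if_pos ⟨by linarith, by simp; nlinarith⟩]; nlinarith
          · rw [if_neg (fun hcon => by linarith [hcon.1]), if_pos ⟨by linarith, by linarith⟩]
            nlinarith
      simp only [h1]; ring
    have p2 : ∫ y in (c - a)..c, y * pDen (-a) (y - c)
        = ∫ y in (c - a)..c, (-(1:ℝ)/64 * y ^ 3 + (2 * (c - a) / 64) * y ^ 2
            + ((a ^ 2 + 2 * a * c - c ^ 2) / 64) * y + 0) := by
      apply intervalIntegral.integral_congr
      intro y hy
      rw [Set.uIcc_of_le (by linarith)] at hy
      simp only [hmid y (by linarith [hy.1]) hy.1 hy.2]; ring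
    have p3 : ∫ y in c..(c + a), y * pDen (-a) (y - c)
        = ∫ y in c..(c + a), ((1:ℝ)/64 * y ^ 3 + (-2 * (c + a) / 64) * y ^ 2
            + ((c + a) ^ 2 / 64) * y + 0) := by
      apply intervalIntegral.integral_congr
      intro y hy
      rw [Set.uIcc_of_le (by linarith)] at hy
      exact hright y hy.1 hy.2
    rw [← intervalIntegral.integral_add_adjacent_intervals (hii 0 (c - a)) (hii (c - a) (c + a)),
      ← intervalIntegral.integral_add_adjacent_intervals (hii (c - a) c) (hii c (c + a)),
      p1, p2, p3, poly_int, poly_int, poly_int, max_eq_right (by linarith)]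
    ring
  · -- c ≤ a : two pieces [0, c], [c, c+a]
    have p2 : ∫ y in (0:ℝ)..c, y * pDen (-a) (y - c)
        = ∫ y in (0:ℝ)..c, (-(1:ℝ)/64 * y ^ 3 + (2 * (c - a) / 64) * y ^ 2
            + ((a ^ 2 + 2 * a * c - c ^ 2) / 64) * y + 0) := by
      apply intervalIntegral.integral_congr
      intro y hy
      rw [Set.uIcc_of_le hc] at hy
      simp only [hmid y hy.1 (by linarith [hy.1]) hy.2]; ring
    have p3 : ∫ y in c..(c + a), y * pDen (-a) (y - c)
        = ∫ y in c..(c + a), ((1:ℝ)/64 * y ^ 3 + (-2 * (c + a) / 64) * y ^ 2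
            + ((c + a) ^ 2 / 64) * y + 0) := by
      apply intervalIntegral.integral_congr
      intro y hy
      rw [Set.uIcc_of_le (by linarith)] at hy
      exact hright y hy.1 hy.2
    rw [← intervalIntegral.integral_add_adjacent_intervals (hii 0 c) (hii c (c + a)),
      p2, p3, poly_int, poly_int, max_eq_left (by linarith)]
    ring

theorem integral_I3 (l1 l2 l3 l4 : ℝ) (h12 : l2 < l1) (h23 : l3 < l2) (h34 : l4 < l3)
    (hsum : l1 + l2 + l3 + l4 = 0)
    (c1 c2 c3 : ℝ) (hc3 : c3 = 2 * (l1 + l2)) (hc2 : c2 = 2 * (l1 + l3))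
    (hc1 : c1 = 2 * |l1 + l4|) :
    ∀ x : ℝ, 0 ≤ x → x ≤ c3 →
      (∫ y in Set.Ici (0 : ℝ),
          x * y * (pDen (x - c3) (y - c2) + pDen (x - c3) (y + c2)
            - pDen (x - c3) (y - c1) - pDen (x - c3) (y + c1)))
        = (c2 ^ 2 - c1 ^ 2) / 64 * x * (x - c3) ^ 2 := by
  intro x hx0 hx3
  have ha : 0 ≤ c3 - x := by linarith
  have hc2' : 0 ≤ c2 := by nlinarith
  have hc1' : 0 ≤ c1 := by rw [hc1]; positivity
  set a : ℝ := c3 - x with hadef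
  have hxc : x - c3 = -a := by rw [hadef]; ring
  have key : (fun y : ℝ =>
      x * y * (pDen (x - c3) (y - c2) + pDen (x - c3) (y + c2)
        - pDen (x - c3) (y - c1) - pDen (x - c3) (y + c1)))
      = fun y : ℝ => x * ((y * pDen (-a) (y - c2) + y * pDen (-a) (y + c2))
        - (y * pDen (-a) (y - c1) + y * pDen (-a) (y + c1))) := by
    funext y; rw [hxc]; ring
  rw [key, MeasureTheory.integral_const_mul]
  have im2 : IntegrableOn (fun y : ℝ => y * pDen (-a) (y - c2)) (Set.Ici 0) := by
    have := integrableOn_slice a (-c2) ha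
    simpa [sub_eq_add_neg] using this
  have ip2 : IntegrableOn (fun y : ℝ => y * pDen (-a) (y + c2)) (Set.Ici 0) :=
    integrableOn_slice a c2 ha
  have im1 : IntegrableOn (fun y : ℝ => y * pDen (-a) (y - c1)) (Set.Ici 0) := by
    have := integrableOn_slice a (-c1) ha
    simpa [sub_eq_add_neg] using this
  have ip1 : IntegrableOn (fun y : ℝ => y * pDen (-a) (y + c1)) (Set.Ici 0) :=
    integrableOn_slice a c1 ha
  have hI12 : IntegrableOn (fun y : ℝ => y * pDen (-a) (y - c2) + y * pDen (-a) (y + c2))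
      (Set.Ici 0) := im2.add ip2
  have hI34 : IntegrableOn (fun y : ℝ => y * pDen (-a) (y - c1) + y * pDen (-a) (y + c1))
      (Set.Ici 0) := im1.add ip1
  rw [MeasureTheory.integral_sub hI12 hI34,
    MeasureTheory.integral_add im2 ip2, MeasureTheory.integral_add im1 ip1,
    Lminus a c2 ha hc2', Lplus a c2 ha hc2', Lminus a c1 ha hc1', Lplus a c1 ha hc1']
  have hx2 : (x - c3) ^ 2 = a ^ 2 := by rw [hxc]; ring
  rw [hx2]; ring
end

section
/- Let ρ be a 4×4 complex matrix indexed by Fin 2 × Fin 2 whose partial trace over the second factor equals (1/2)·I₂, and let ρ^Γ denote its partial transpose on the first factor, defined entrywise by (ρ^Γ)_{(i,k),(j,l)} = ρ_{(j,k),(i,l)}. Then for every λ ∈ ℂ, det(ρ^Γ − (1/2 − λ)·I₄) = det(ρ − λ·I₄); equivalently, the characteristic polynomials satisfy f_{ρ^Γ}(1/2 − λ) = f_ρ(λ). -/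
open Matrix

/-- Partial trace over the second factor of a two-qubit matrix. -/
noncomputable def ptrace2 (ρ : Matrix (Fin 2 × Fin 2) (Fin 2 × Fin 2) ℂ) : Matrix (Fin 2) (Fin 2) ℂ :=
  fun i j => ∑ k, ρ (i, k) (j, k)

/-- Partial transpose on the first factor of a two-qubit matrix. -/
noncomputable def ptranspose1 (ρ : Matrix (Fin 2 × Fin 2) (Fin 2 × Fin 2) ℂ) :
    Matrix (Fin 2 × Fin 2) (Fin 2 × Fin 2) ℂ :=
  fun p q => ρ (q.1, p.2) (p.1, q.2)

/-!
For a `2 × 2` matrix `X` one has `Xᵀ = J (tr X • 1 - X) Jᵀ` with `J = !![0, 1; -1, 0]`, since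
`tr X • 1 - X` is the adjugate of `X`. Applied on the second tensor factor this gives
`ρ^{T₂} = S (Tr₂ ρ ⊗ 1 - ρ) Sᵀ` with `S = 1 ⊗ J` orthogonal, so when `Tr₂ ρ = ½ • 1` the matrix
`ρ^{T₂}` is orthogonally similar to `½ - ρ`. As `ρ^Γ = (ρ^{T₂})ᵀ`, this yields
`det (ρ^Γ - (½ - λ)) = det (λ - ρ)`, and `det (-M) = det M` in dimension four.
-/

open scoped Kronecker

namespace Matrix

variable {m n R : Type*}

def partialTraceSnd [Fintype n] [AddCommMonoid R] (ρ : Matrix (m × n) (m × n) R) : Matrix m m R :=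
  fun i j => ∑ k, ρ (i, k) (j, k)

def partialTransposeSnd (ρ : Matrix (m × n) (m × n) R) : Matrix (m × n) (m × n) R :=
  fun p q => ρ (p.1, q.2) (q.1, p.2)

def symplecticFinTwo [Zero R] [One R] [Neg R] : Matrix (Fin 2) (Fin 2) R := !![0, 1; -1, 0]

section CommRing

variable [CommRing R]

theorem det_mul_mul_transpose_of_mul_transpose_eq_one [Fintype n] [DecidableEq n]
    {S : Matrix n n R} (hS : S * Sᵀ = 1) (A : Matrix n n R) : (S * A * Sᵀ).det = A.det := by
  have hdet : S.det * S.det = 1 := by simpa [det_transpose] using congrArg det hS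
  rw [det_mul, det_mul, det_transpose, mul_right_comm, hdet, one_mul]

theorem symplecticFinTwo_mul_transpose :
    symplecticFinTwo * symplecticFinTwoᵀ = (1 : Matrix (Fin 2) (Fin 2) R) := by
  ext i j
  fin_cases i <;> fin_cases j <;> simp [symplecticFinTwo, mul_apply, Fin.sum_univ_two]

variable [Fintype m] [DecidableEq m]

theorem one_kronecker_symplecticFinTwo_mul_transpose :
    ((1 : Matrix m m R) ⊗ₖ symplecticFinTwo) * (1 ⊗ₖ symplecticFinTwo)ᵀ = 1 := by
  rw [← kroneckerMap_transpose, transpose_one, ← mul_kronecker_mul, mul_one,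
    symplecticFinTwo_mul_transpose, one_kronecker_one]

theorem partialTransposeSnd_eq_conj (ρ : Matrix (m × Fin 2) (m × Fin 2) R) :
    partialTransposeSnd ρ = (1 ⊗ₖ symplecticFinTwo) * (partialTraceSnd ρ ⊗ₖ 1 - ρ) *
      (1 ⊗ₖ symplecticFinTwo)ᵀ := by
  ext ⟨i, k⟩ ⟨j, l⟩
  fin_cases k <;> fin_cases l <;>
    simp [partialTransposeSnd, partialTraceSnd, symplecticFinTwo, mul_apply,
      Fintype.sum_prod_type, Fin.sum_univ_two, one_apply]

theorem det_partialTransposeSnd_sub_smul_one {ρ : Matrix (m × Fin 2) (m × Fin 2) R} {c : R}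
    (hρ : partialTraceSnd ρ = c • 1) (μ : R) :
    (partialTransposeSnd ρ - μ • 1).det = ((c - μ) • 1 - ρ).det := by
  set S : Matrix (m × Fin 2) (m × Fin 2) R := 1 ⊗ₖ symplecticFinTwo
  have hS : S * Sᵀ = 1 := one_kronecker_symplecticFinTwo_mul_transpose
  have hμ : μ • (1 : Matrix (m × Fin 2) (m × Fin 2) R) = S * (μ • 1) * Sᵀ := by
    rw [mul_smul_comm, mul_one, smul_mul_assoc, hS]
  rw [partialTransposeSnd_eq_conj, hρ, smul_kronecker, one_kronecker_one, hμ, ← sub_mul,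
    ← mul_sub, det_mul_mul_transpose_of_mul_transpose_eq_one hS, sub_right_comm, ← sub_smul]

end CommRing

end Matrix

theorem charpoly_partial_transpose (ρ : Matrix (Fin 2 × Fin 2) (Fin 2 × Fin 2) ℂ)
    (hρ : ptrace2 ρ = (1 / 2 : ℂ) • (1 : Matrix (Fin 2) (Fin 2) ℂ)) :
    ∀ lam : ℂ,
      (ptranspose1 ρ - (1 / 2 - lam) • (1 : Matrix (Fin 2 × Fin 2) (Fin 2 × Fin 2) ℂ)).det
        = (ρ - lam • (1 : Matrix (Fin 2 × Fin 2) (Fin 2 × Fin 2) ℂ)).det := by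
  intro lam
  calc (ptranspose1 ρ - (1 / 2 - lam) • 1).det
      = (partialTransposeSnd ρ - (1 / 2 - lam) • 1).det := by
        rw [← det_transpose, transpose_sub, transpose_smul, transpose_one]
        rfl
    _ = (lam • 1 - ρ).det := by
        rw [det_partialTransposeSnd_sub_smul_one hρ, sub_sub_cancel]
    _ = (ρ - lam • 1).det := by
        rw [← neg_sub, det_neg]
        norm_num
end

section
/- Let U be a 2×2 unitary matrix and η a 2×2 density matrix. Then the map ρ ↦ (U ⊗ I₂) ρ (U ⊗ I₂)ᴴ is a bijection from D^η onto D^{UηUᴴ} that maps separable matrices onto separable matrices, and it preserves Hilbert–Schmidt volume: μH^{12}(D^{UηUᴴ}) = μH^{12}(D^η) and μH^{12}(D^{UηUᴴ}_sep) = μH^{12}(D^η_sep). -/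
/-!
Conjugation by `U ⊗ 1` preserves positivity and trace, turns the first marginal `η` into
`U η Uᴴ`, and sends a product `σ ⊗ τ` to `(U σ Uᴴ) ⊗ τ`; hence it maps `D^η` and `D^η_sep` into
their counterparts for `U η Uᴴ`. Conjugation by `Uᴴ ⊗ 1` does the same in the other direction
and inverts it, so both maps are bijections. Being unitary, the conjugation is a Frobenius
isometry, and isometries preserve Hausdorff measure.
-/

open MeasureTheory Matrix
open scoped Kronecker ComplexOrder

noncomputable instance matrixFrobenius (m n : Type*) [Fintype m] [Fintype n] :
    NormedAddCommGroup (Matrix m n ℂ) :=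
  Matrix.frobeniusNormedAddCommGroup

noncomputable instance matrixMeasurableSpace (m n : Type*) [Fintype m] [Fintype n] :
    MeasurableSpace (Matrix m n ℂ) := borel _

instance matrixBorelSpace (m n : Type*) [Fintype m] [Fintype n] :
    @BorelSpace (Matrix m n ℂ)
      (matrixFrobenius m n).toMetricSpace.toEMetricSpace.toPseudoEMetricSpace.toUniformSpace.toTopologicalSpace
      _ := ⟨by unfold matrixFrobenius; rfl⟩

/-- A density matrix: positive semidefinite of trace 1. -/
def IsDensity {n : Type*} [Fintype n] (ρ : Matrix n n ℂ) : Prop :=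
  ρ.PosSemidef ∧ ρ.trace = 1

/-- Separability of a two-qubit density matrix. -/
def SeparableState (ρ : Matrix (Fin 2 × Fin 2) (Fin 2 × Fin 2) ℂ) : Prop :=
  ∃ (K : ℕ) (_ : 1 ≤ K) (w : Fin K → ℝ)
    (σ τ : Fin K → Matrix (Fin 2) (Fin 2) ℂ),
    (∀ k, 0 ≤ w k) ∧ (∑ k, w k = 1) ∧
    (∀ k, IsDensity (σ k)) ∧ (∀ k, IsDensity (τ k)) ∧
    ρ = ∑ k, (w k : ℂ) • (σ k ⊗ₖ τ k)

/-- The conditioned state space `D^η`: two-qubit density matrices with first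
marginal `η`. -/
def Dcond (η : Matrix (Fin 2) (Fin 2) ℂ) :
    Set (Matrix (Fin 2 × Fin 2) (Fin 2 × Fin 2) ℂ) :=
  {ρ | IsDensity ρ ∧ ptrace2 ρ = η}

namespace Matrix

variable {m n : Type*} [Fintype m] [Fintype n]

theorem frobenius_norm_sq_eq_re_trace (A : Matrix m n ℂ) : ‖A‖ ^ 2 = (Aᴴ * A).trace.re := by
  rw [frobenius_norm_def, ← Real.sqrt_eq_rpow, Real.sq_sqrt (by positivity), trace,
    Finset.sum_comm, Complex.re_sum]
  refine Finset.sum_congr rfl fun j _ => ?_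
  simp only [diag_apply, mul_apply, conjTranspose_apply, Complex.re_sum, RCLike.star_def,
    Complex.conj_mul', Real.rpow_two]
  norm_cast

variable [DecidableEq n] {V : Matrix n n ℂ}

theorem conjTranspose_mul_unitary_conj (hV : V ∈ unitaryGroup n ℂ) (X : Matrix n n ℂ) :
    Vᴴ * (V * X * Vᴴ) * V = X := by
  have h : Vᴴ * V = 1 := mem_unitaryGroup_iff'.mp hV
  rw [Matrix.mul_assoc, Matrix.mul_assoc, h, Matrix.mul_one, ← Matrix.mul_assoc, h, Matrix.one_mul]

theorem frobenius_norm_unitary_conj (hV : V ∈ unitaryGroup n ℂ) (X : Matrix n n ℂ) :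
    ‖V * X * Vᴴ‖ = ‖X‖ := by
  have h : Vᴴ * V = 1 := mem_unitaryGroup_iff'.mp hV
  refine (sq_eq_sq₀ (norm_nonneg _) (norm_nonneg _)).mp ?_
  have hconj : (V * X * Vᴴ)ᴴ * (V * X * Vᴴ) = V * (Xᴴ * X) * Vᴴ := by
    simp only [conjTranspose_mul, conjTranspose_conjTranspose, Matrix.mul_assoc]
    rw [← Matrix.mul_assoc Vᴴ V, h, Matrix.one_mul]
  rw [frobenius_norm_sq_eq_re_trace, frobenius_norm_sq_eq_re_trace, hconj, trace_mul_cycle, h,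
    Matrix.one_mul]

theorem isometry_unitary_conj (hV : V ∈ unitaryGroup n ℂ) : Isometry fun X => V * X * Vᴴ :=
  Isometry.of_dist_eq fun X Y => by
    rw [dist_eq_norm, dist_eq_norm, ← Matrix.sub_mul, ← Matrix.mul_sub,
      frobenius_norm_unitary_conj hV]

end Matrix

theorem IsDensity.unitary_conj {n : Type*} [Fintype n] [DecidableEq n] {V ρ : Matrix n n ℂ}
    (hV : V ∈ unitaryGroup n ℂ) (hρ : IsDensity ρ) : IsDensity (V * ρ * Vᴴ) := by
  have h : Vᴴ * V = 1 := mem_unitaryGroup_iff'.mp hV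
  exact ⟨hρ.1.mul_mul_conjTranspose_same V, by rw [trace_mul_cycle, h, Matrix.one_mul, hρ.2]⟩

section TwoQubit

variable {U : Matrix (Fin 2) (Fin 2) ℂ}

theorem ptrace2_kronecker_one_mul_mul (A B : Matrix (Fin 2) (Fin 2) ℂ)
    (ρ : Matrix (Fin 2 × Fin 2) (Fin 2 × Fin 2) ℂ) :
    ptrace2 ((A ⊗ₖ (1 : Matrix (Fin 2) (Fin 2) ℂ)) * ρ * (B ⊗ₖ 1)) = A * ptrace2 ρ * B := by
  ext i j
  simp only [ptrace2, mul_apply, kroneckerMap_apply, Fintype.sum_prod_type, one_apply, mul_ite,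
    ite_mul, mul_one, mul_zero, zero_mul, Finset.sum_ite_eq, Finset.sum_ite_eq', Finset.mem_univ,
    if_true, Finset.sum_mul, Finset.mul_sum]
  exact Finset.sum_comm.trans (Finset.sum_congr rfl fun _ _ => Finset.sum_comm)

theorem kronecker_one_mem_unitaryGroup {m n : Type*} [Fintype m] [DecidableEq m] [Fintype n]
    [DecidableEq n] {V : Matrix n n ℂ} (hV : V ∈ unitaryGroup n ℂ) :
    V ⊗ₖ (1 : Matrix m m ℂ) ∈ unitaryGroup (n × m) ℂ :=
  kronecker_mem_unitary hV (one_mem _)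

theorem kronecker_one_conj_kronecker {m n : Type*} [Fintype m] [DecidableEq m] [Fintype n]
    (W σ : Matrix n n ℂ) (τ : Matrix m m ℂ) :
    (W ⊗ₖ (1 : Matrix m m ℂ)) * (σ ⊗ₖ τ) * (W ⊗ₖ 1)ᴴ = (W * σ * Wᴴ) ⊗ₖ τ := by
  rw [conjTranspose_kronecker, conjTranspose_one, ← mul_kronecker_mul, Matrix.one_mul,
    ← mul_kronecker_mul, Matrix.mul_one]

theorem SeparableState.unitary_conj (hU : U ∈ unitaryGroup (Fin 2) ℂ)
    {ρ : Matrix (Fin 2 × Fin 2) (Fin 2 × Fin 2) ℂ} (hρ : SeparableState ρ) :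
    SeparableState ((U ⊗ₖ (1 : Matrix (Fin 2) (Fin 2) ℂ)) * ρ * (U ⊗ₖ 1)ᴴ) := by
  obtain ⟨K, hK, w, σ, τ, hw, hw_sum, hσ, hτ, rfl⟩ := hρ
  refine ⟨K, hK, w, fun k => U * σ k * Uᴴ, τ, hw, hw_sum, fun k => (hσ k).unitary_conj hU, hτ, ?_⟩
  simp only [Finset.mul_sum, Finset.sum_mul]
  refine Finset.sum_congr rfl fun k _ => ?_
  rw [mul_smul_comm, smul_mul_assoc, kronecker_one_conj_kronecker]

theorem mapsTo_Dcond_kronecker_one_conj (hU : U ∈ unitaryGroup (Fin 2) ℂ)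
    (η : Matrix (Fin 2) (Fin 2) ℂ) :
    Set.MapsTo (fun ρ => (U ⊗ₖ (1 : Matrix (Fin 2) (Fin 2) ℂ)) * ρ * (U ⊗ₖ 1)ᴴ)
      (Dcond η) (Dcond (U * η * Uᴴ)) := fun ρ ⟨hρ, hη⟩ =>
  ⟨hρ.unitary_conj (kronecker_one_mem_unitaryGroup hU), by
    rw [conjTranspose_kronecker, conjTranspose_one, ptrace2_kronecker_one_mul_mul, hη]⟩

theorem mapsTo_separable_kronecker_one_conj (hU : U ∈ unitaryGroup (Fin 2) ℂ)
    (η : Matrix (Fin 2) (Fin 2) ℂ) :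
    Set.MapsTo (fun ρ => (U ⊗ₖ (1 : Matrix (Fin 2) (Fin 2) ℂ)) * ρ * (U ⊗ₖ 1)ᴴ)
      {ρ ∈ Dcond η | SeparableState ρ} {ρ ∈ Dcond (U * η * Uᴴ) | SeparableState ρ} :=
  fun _ ⟨hD, hsep⟩ => ⟨mapsTo_Dcond_kronecker_one_conj hU η hD, hsep.unitary_conj hU⟩

theorem bijOn_kronecker_one_conj_of_mapsTo
    {S : Matrix (Fin 2) (Fin 2) ℂ → Set (Matrix (Fin 2 × Fin 2) (Fin 2 × Fin 2) ℂ)}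
    (hS : ∀ U ∈ unitaryGroup (Fin 2) ℂ, ∀ η,
      Set.MapsTo (fun ρ => (U ⊗ₖ (1 : Matrix (Fin 2) (Fin 2) ℂ)) * ρ * (U ⊗ₖ 1)ᴴ)
        (S η) (S (U * η * Uᴴ)))
    (hU : U ∈ unitaryGroup (Fin 2) ℂ) (η : Matrix (Fin 2) (Fin 2) ℂ) :
    Set.BijOn (fun ρ => (U ⊗ₖ (1 : Matrix (Fin 2) (Fin 2) ℂ)) * ρ * (U ⊗ₖ 1)ᴴ)
      (S η) (S (U * η * Uᴴ)) := by
  have hUH : Uᴴ ∈ unitaryGroup (Fin 2) ℂ := by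
    rw [← star_eq_conjTranspose]; exact Unitary.star_mem hU
  have hback := hS Uᴴ hUH (U * η * Uᴴ)
  rw [conjTranspose_conjTranspose, conjTranspose_mul_unitary_conj hU] at hback
  refine Set.InvOn.bijOn ⟨fun ρ _ => ?_, fun ρ _ => ?_⟩ (hS U hU η) hback
  · simpa only [conjTranspose_kronecker, conjTranspose_conjTranspose, conjTranspose_one] using
      conjTranspose_mul_unitary_conj (kronecker_one_mem_unitaryGroup (m := Fin 2) hU) ρ
  · simpa only [conjTranspose_kronecker, conjTranspose_conjTranspose, conjTranspose_one] using
      conjTranspose_mul_unitary_conj (kronecker_one_mem_unitaryGroup (m := Fin 2) hUH) ρ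

end TwoQubit

theorem local_unitary_invariance_general (U η : Matrix (Fin 2) (Fin 2) ℂ)
    (hU : U ∈ Matrix.unitaryGroup (Fin 2) ℂ) :
    Set.BijOn (fun ρ => (U ⊗ₖ (1 : Matrix (Fin 2) (Fin 2) ℂ)) * ρ
        * (U ⊗ₖ (1 : Matrix (Fin 2) (Fin 2) ℂ))ᴴ)
      (Dcond η) (Dcond (U * η * Uᴴ)) ∧
    (fun ρ => (U ⊗ₖ (1 : Matrix (Fin 2) (Fin 2) ℂ)) * ρ
        * (U ⊗ₖ (1 : Matrix (Fin 2) (Fin 2) ℂ))ᴴ) ''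
        {ρ ∈ Dcond η | SeparableState ρ} = {ρ ∈ Dcond (U * η * Uᴴ) | SeparableState ρ} ∧
    μH[(12 : ℝ)] (Dcond (U * η * Uᴴ)) = μH[(12 : ℝ)] (Dcond η) ∧
    μH[(12 : ℝ)] {ρ ∈ Dcond (U * η * Uᴴ) | SeparableState ρ}
      = μH[(12 : ℝ)] {ρ ∈ Dcond η | SeparableState ρ} := by
  have hDcond := bijOn_kronecker_one_conj_of_mapsTo (fun _ => mapsTo_Dcond_kronecker_one_conj) hU η
  have hsep :=
    bijOn_kronecker_one_conj_of_mapsTo (fun _ => mapsTo_separable_kronecker_one_conj) hU η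
  have hiso := isometry_unitary_conj (kronecker_one_mem_unitaryGroup (m := Fin 2) hU)
  refine ⟨hDcond, hsep.image_eq, ?_, ?_⟩
  · rw [← hDcond.image_eq, hiso.hausdorffMeasure_image (Or.inl (by norm_num))]
  · rw [← hsep.image_eq, hiso.hausdorffMeasure_image (Or.inl (by norm_num))]

theorem local_unitary_invariance (U η : Matrix (Fin 2) (Fin 2) ℂ)
    (hU : U ∈ Matrix.unitaryGroup (Fin 2) ℂ) (hη : IsDensity η) :
    Set.BijOn (fun ρ => (U ⊗ₖ (1 : Matrix (Fin 2) (Fin 2) ℂ)) * ρ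
        * (U ⊗ₖ (1 : Matrix (Fin 2) (Fin 2) ℂ))ᴴ)
      (Dcond η) (Dcond (U * η * Uᴴ)) ∧
    (fun ρ => (U ⊗ₖ (1 : Matrix (Fin 2) (Fin 2) ℂ)) * ρ
        * (U ⊗ₖ (1 : Matrix (Fin 2) (Fin 2) ℂ))ᴴ) ''
        {ρ ∈ Dcond η | SeparableState ρ} = {ρ ∈ Dcond (U * η * Uᴴ) | SeparableState ρ} ∧
    μH[(12 : ℝ)] (Dcond (U * η * Uᴴ)) = μH[(12 : ℝ)] (Dcond η) ∧
    μH[(12 : ℝ)] {ρ ∈ Dcond (U * η * Uᴴ) | SeparableState ρ}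
      = μH[(12 : ℝ)] {ρ ∈ Dcond η | SeparableState ρ} :=
  local_unitary_invariance_general U η hU
end
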